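/- For every integer N ≥ 2 and every real p with 1/2 < p ≤ 1, d3(N, p) ≤ 0. -/
import Mathlib


/-- The quantity `d1(N, p)`. -/
noncomputable def d1 (N : ℕ) (p : ℝ) : ℝ :=
  -(N : ℝ) ^ 4 * (1 - 2 * p + 2 * p ^ 2) ^ 2
    + (N : ℝ) ^ 3 * (1 - 6 * p + 17 * p ^ 2 - 22 * p ^ 3 + 16 * p ^ 4)
    + (N : ℝ) ^ 2 * (-1 + 4 * p - 17 * p ^ 2 + 29 * p ^ 3 - 26 * p ^ 4)
    + 2 * (N : ℝ) * p * (-1 + 6 * p - 12 * p ^ 2 + 10 * p ^ 3)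
    + (p - 4 * p ^ 2 + 9 * p ^ 3 - 6 * p ^ 4)

/-- The quantity `d2(N, p)`. -/
noncomputable def d2 (N : ℕ) (p : ℝ) : ℝ :=
  (N : ℝ) ^ 4 * (-1 + 4 * p - 12 * p ^ 2 + 16 * p ^ 3 - 8 * p ^ 4)
    + (N : ℝ) ^ 3 * p * (-4 + 31 * p - 56 * p ^ 2 + 34 * p ^ 3)
    + (N : ℝ) ^ 2 * (p - 33 * p ^ 2 + 77 * p ^ 3 - 52 * p ^ 4)
    + (N : ℝ) * p * (-1 + 22 * p - 52 * p ^ 2 + 32 * p ^ 3)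
    + (p - 8 * p ^ 2 + 15 * p ^ 3 - 6 * p ^ 4)

/-- The quantity `d3(N, p)`. -/
noncomputable def d3 (N : ℕ) (p : ℝ) : ℝ :=
  (N : ℝ) * (p - 1) *
    (p - 12 * p ^ 3 + 4 * (N : ℝ) ^ 3 * p * (1 - 2 * p + 2 * p ^ 2)
      + (N : ℝ) * p * (1 - 12 * p + 33 * p ^ 2)
      - (N : ℝ) ^ 2 * (1 + 4 * p - 19 * p ^ 2 + 29 * p ^ 3))

theorem stmt18 (N : ℕ) (hN : 2 ≤ N) (p : ℝ) (hp : 1 / 2 < p) (hp1 : p ≤ 1) :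
    d3 N p ≤ 0 := by
  have hn : (2:ℝ) ≤ (N:ℝ) := by exact_mod_cast hN
  set n := (N:ℝ) with hdef
  have hE : 0 ≤ p - 12 * p ^ 3 + 4 * n ^ 3 * p * (1 - 2 * p + 2 * p ^ 2)
      + n * p * (1 - 12 * p + 33 * p ^ 2)
      - n ^ 2 * (1 + 4 * p - 19 * p ^ 2 + 29 * p ^ 3) := by
    nlinarith [mul_nonneg (sub_nonneg.2 hn) (sub_nonneg.2 hp1), sq_nonneg (n-2), sq_nonneg (2*p-1), mul_nonneg (mul_nonneg (sub_nonneg.2 hn) (sub_nonneg.2 hn)) (sub_nonneg.2 hp1), mul_nonneg (sub_nonneg.2 hn) (sq_nonneg (2*p-1)), mul_nonneg (mul_nonneg (sub_nonneg.2 hn) (sub_nonneg.2 hn)) (sq_nonneg (2*p-1)), mul_nonneg (mul_nonneg (mul_nonneg (sub_nonneg.2 hn) (sub_nonneg.2 hn)) (sub_nonneg.2 hn)) (le_of_lt (lt_trans (by norm_num) hp : (0:ℝ) < p)), mul_nonneg (mul_nonneg (sub_nonneg.2 hn) (sub_nonneg.2 hp1)) (by linarith : (0:ℝ) ≤ p),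 mul_nonneg (sub_nonneg.2 hp1) (sq_nonneg (2*p-1))]
  have h1 : n * (p - 1) ≤ 0 := mul_nonpos_of_nonneg_of_nonpos (by linarith) (by linarith)
  unfold d3
  rw [← hdef]
  exact mul_nonpos_of_nonpos_of_nonneg h1 hE
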